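/- In the generalized Petersen graph GP(4k,2) with k ≥ 3, for every i with 0 ≤ i ≤ 4k−1 and every l with 3 ≤ l ≤ 2k−2, the vertices u_i and u_{i+2l−1} are mutually maximally distant. -/

import Mathlib

/-- A vertex `w` strongly resolves vertices `u` and `v` in graph `G`:
`u` lies on a shortest `v`–`w` path or `v` lies on a shortest `u`–`w` path,
equivalently via distances. -/
def StronglyResolves {V : Type*} (G : SimpleGraph V) (w u v : V) : Prop :=
  G.dist w u = G.dist w v + G.dist v u ∨ G.dist w v = G.dist w u + G.dist u v

/-- `S` is a strong resolving set of `G`. -/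
def IsStrongResolvingSet {V : Type*} (G : SimpleGraph V) (S : Set V) : Prop :=
  ∀ u v : V, u ≠ v → ∃ w ∈ S, StronglyResolves G w u v

/-- The strong metric dimension: minimum cardinality of a strong resolving set. -/
noncomputable def sdim {V : Type*} (G : SimpleGraph V) : ℕ :=
  sInf {m : ℕ | ∃ S : Set V, IsStrongResolvingSet G S ∧ S.ncard = m}

/-- Mutually maximally distant vertices. -/
def MutuallyMaximallyDistant {V : Type*} (G : SimpleGraph V) (u v : V) : Prop :=
  u ≠ v ∧ (∀ w : V, G.Adj u w → G.dist w v ≤ G.dist u v) ∧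
    (∀ w : V, G.Adj v w → G.dist u w ≤ G.dist u v)

/-- The generalized Petersen graph `GP n k`, with outer vertices `Sum.inl i` (the `uᵢ`)
and inner vertices `Sum.inr i` (the `vᵢ`), indices in `ZMod n`. -/
def GP (n k : ℕ) : SimpleGraph (ZMod n ⊕ ZMod n) where
  Adj x y := match x, y with
    | Sum.inl i, Sum.inl j => i ≠ j ∧ (j = i + 1 ∨ i = j + 1)
    | Sum.inl i, Sum.inr j => i = j
    | Sum.inr i, Sum.inl j => i = j
    | Sum.inr i, Sum.inr j => i ≠ j ∧ (j = i + (k : ZMod n) ∨ i = j + (k : ZMod n))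
  symm := ⟨by rintro (i|i) (j|j) h <;> simp_all <;> tauto⟩
  loopless := ⟨by rintro (i|i) h <;> simp_all⟩

/-!
Record a walk in `GP n m` by the net numbers `A` of rim steps and `B` of inner steps and the
number `s` of spokes: its length is at least `|A| + |B| + s`, its endpoints differ by `A + m B`,
and between two outer vertices `s` is even, hence at least `2` once `B ≠ 0`.

Take `m = 2`, `n = 2 (p + q + 1)` and `b = a + 2p + 1` with `p, q ≥ 2` (for the theorem,
`p = l - 1` and `q = 2k - l`). A walk from `u_a` to `u_b` has `A + 2B ≡ 2p + 1 (mod n)`, so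
`|A| + 2|B| ≥ min (2p + 1) (2q + 1)` with `A` odd, and `d(u_a, u_b) ≥ min p q + 3`. Conversely,
going round either way, every neighbour of `u_a` is within `min p q + 3` of `u_b`; exchanging
`(a, p)` with `(b, q)` gives the same for the neighbours of `u_b`.
-/

open SimpleGraph Sum

namespace SimpleGraph

variable {V : Type*} {G : SimpleGraph V} {u v : V}

lemma dist_le_one_of_adj_or_eq (h : G.Adj u v ∨ u = v) : G.dist u v ≤ 1 := by
  rcases h with h | rfl
  · exact (dist_eq_one_iff_adj.mpr h).le
  · simp

lemma reachable_of_adj_or_eq (h : G.Adj u v ∨ u = v) : G.Reachable u v := by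
  rcases h with h | rfl
  · exact h.reachable
  · rfl

end SimpleGraph

namespace GP

variable {n m : ℕ}

def index : ZMod n ⊕ ZMod n → ZMod n := Sum.elim id id

@[simp] lemma index_inl (i : ZMod n) : index (inl i) = i := rfl
@[simp] lemma index_inr (i : ZMod n) : index (inr i) = i := rfl

lemma adj_inl_inr (i : ZMod n) : (GP n m).Adj (inl i) (inr i) := rfl

lemma adj_or_eq_inl_add_one (c : ZMod n) :
    (GP n m).Adj (inl c) (inl (c + 1)) ∨ (inl c : ZMod n ⊕ ZMod n) = inl (c + 1) := by
  by_cases h : c = c + 1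
  · exact Or.inr (congrArg inl h)
  · exact Or.inl ⟨h, Or.inl rfl⟩

lemma adj_or_eq_inr_add (c : ZMod n) :
    (GP n m).Adj (inr c) (inr (c + m)) ∨ (inr c : ZMod n ⊕ ZMod n) = inr (c + (m : ZMod n)) := by
  by_cases h : c = c + m
  · exact Or.inr (congrArg inr h)
  · exact Or.inl ⟨h, Or.inl rfl⟩

lemma eq_or_eq_or_eq_of_adj_inl {a : ZMod n} {w : ZMod n ⊕ ZMod n}
    (h : (GP n m).Adj (inl a) w) : w = inl (a + 1) ∨ w = inl (a - 1) ∨ w = inr a := by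
  rcases w with j | j
  · obtain ⟨-, rfl | rfl⟩ := h
    · exact Or.inl rfl
    · exact Or.inr (Or.inl (by simp))
  · exact Or.inr (Or.inr (congrArg inr h.symm))

lemma connected : (GP n m).Connected := by
  have rim (z : ℤ) : (GP n m).Reachable (inl 0) (inl (z : ZMod n)) := by
    induction z using Int.induction_on with
    | zero => simp only [Int.cast_zero]; rfl
    | succ i ih =>
      push_cast at ih ⊢
      exact ih.trans (reachable_of_adj_or_eq (adj_or_eq_inl_add_one _))
    | pred i ih =>
      have step := reachable_of_adj_or_eq (adj_or_eq_inl_add_one (m := m) (-(i : ZMod n) - 1))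
      rw [sub_add_cancel] at step
      push_cast at ih ⊢
      exact ih.trans step.symm
  have hub (x : ZMod n ⊕ ZMod n) : (GP n m).Reachable (inl 0) x := by
    obtain ⟨z, hz⟩ := ZMod.intCast_surjective (index x)
    rcases x with i | i <;> simp only [index_inl, index_inr] at hz <;> subst hz
    · exact rim z
    · exact (rim z).trans (adj_inl_inr _).reachable
  exact ⟨fun x y => (hub x).symm.trans (hub y)⟩

lemma dist_inl_inr (c : ZMod n) : (GP n m).dist (inl c) (inr c) = 1 :=
  dist_eq_one_iff_adj.mpr (adj_inl_inr c)

lemma dist_inr_inl (c : ZMod n) : (GP n m).dist (inr c) (inl c) = 1 := by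
  rw [SimpleGraph.dist_comm, dist_inl_inr]

lemma dist_inr_inr_le {c c' : ZMod n} (j : ℕ) (h : c' = c + m * j) :
    (GP n m).dist (inr c) (inr c') ≤ j := by
  subst h
  induction j with
  | zero => simp
  | succ j ih =>
    set d : ZMod n := c + m * j
    have step := dist_le_one_of_adj_or_eq (adj_or_eq_inr_add (m := m) d)
    have := connected.dist_triangle (G := GP n m) (u := inr c) (v := inr d) (w := inr (d + m))
    rw [show c + m * ((j + 1 : ℕ) : ZMod n) = d + m by push_cast; ring]
    omega

lemma dist_inl_inl_le {c c' : ZMod n} (j : ℕ) (h : c' = c + m * j) :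
    (GP n m).dist (inl c) (inl c') ≤ j + 2 := by
  have := connected.dist_triangle (G := GP n m) (u := inl c) (v := inr c) (w := inl c')
  have := connected.dist_triangle (G := GP n m) (u := inr c) (v := inr c') (w := inl c')
  have := dist_inr_inr_le j h
  have := dist_inl_inr (m := m) c
  have := dist_inr_inl (m := m) c'
  omega

lemma dist_inr_inl_le {c c' : ZMod n} (j : ℕ) (h : c' = c + m * j + 1) :
    (GP n m).dist (inr c) (inl c') ≤ j + 2 := by
  have := connected.dist_triangle (G := GP n m) (u := inr c) (v := inr (c' - 1)) (w := inl c')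
  have := connected.dist_triangle (G := GP n m) (u := inr (c' - 1)) (v := inl (c' - 1))
    (w := inl c')
  have := dist_inr_inr_le j (c := c) (c' := c' - 1) (m := m) (by rw [h]; ring)
  have := dist_inr_inl (m := m) (c' - 1)
  have := dist_le_one_of_adj_or_eq (adj_or_eq_inl_add_one (m := m) (c' - 1))
  rw [sub_add_cancel] at this
  omega

lemma dist_inl_inr_le {c c' : ZMod n} (j : ℕ) (h : c' = c + 1 + m * j) :
    (GP n m).dist (inl c) (inr c') ≤ j + 2 := by
  have := connected.dist_triangle (G := GP n m) (u := inl c) (v := inl (c + 1)) (w := inr c')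
  have := connected.dist_triangle (G := GP n m) (u := inl (c + 1)) (v := inr (c + 1))
    (w := inr c')
  have := dist_le_one_of_adj_or_eq (adj_or_eq_inl_add_one (m := m) c)
  have := dist_inl_inr (m := m) (c + 1)
  have := dist_inr_inr_le j h
  omega

lemma exists_of_adj {x y : ZMod n ⊕ ZMod n} (h : (GP n m).Adj x y) :
    ∃ A B : ℤ, ∃ s : ℕ, index y = index x + A + m * B ∧ A.natAbs + B.natAbs + s = 1 ∧
      (x.isLeft.toNat + y.isLeft.toNat + s) % 2 = 0 ∧
      (B ≠ 0 → x.isLeft.toNat + y.isLeft.toNat = 0) := by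
  rcases x with i | i <;> rcases y with j | j
  · obtain ⟨-, rfl | rfl⟩ := h
    · exact ⟨1, 0, 0, by simp, by simp, by simp, by simp⟩
    · exact ⟨-1, 0, 0, by simp, by simp, by simp, by simp⟩
  · obtain rfl : i = j := h
    exact ⟨0, 0, 1, by simp, by simp, by simp, by simp⟩
  · obtain rfl : i = j := h
    exact ⟨0, 0, 1, by simp, by simp, by simp, by simp⟩
  · obtain ⟨-, rfl | rfl⟩ := h
    · exact ⟨0, 1, 0, by simp, by simp, by simp, by simp⟩
    · exact ⟨0, -1, 0, by simp, by simp, by simp, by simp⟩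

lemma exists_of_walk {x y : ZMod n ⊕ ZMod n} (p : (GP n m).Walk x y) :
    ∃ A B : ℤ, ∃ s : ℕ, index y = index x + A + m * B ∧ A.natAbs + B.natAbs + s ≤ p.length ∧
      (x.isLeft.toNat + y.isLeft.toNat + s) % 2 = 0 ∧
      (B ≠ 0 → x.isLeft.toNat + y.isLeft.toNat ≤ s) := by
  induction p with
  | nil => exact ⟨0, 0, 0, by simp, by simp, by omega, by simp⟩
  | @cons x u y h p ih =>
    obtain ⟨A₁, B₁, s₁, hi₁, hl₁, hpar₁, hB₁⟩ := exists_of_adj h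
    obtain ⟨A₂, B₂, s₂, hi₂, hl₂, hpar₂, hB₂⟩ := ih
    refine ⟨A₁ + A₂, B₁ + B₂, s₁ + s₂, by rw [hi₂, hi₁]; push_cast; ring, ?_, by omega, ?_⟩
    · have := Int.natAbs_add_le A₁ A₂
      have := Int.natAbs_add_le B₁ B₂
      rw [Walk.length_cons]
      omega
    · have := Bool.toNat_le x.isLeft
      have := Bool.toNat_le y.isLeft
      omega

lemma min_add_three_le_dist {p q : ℕ} {a b : ZMod n} (hn : n = 2 * (p + q + 1)) (hp : 2 ≤ p)
    (hq : 2 ≤ q) (hab : b = a + (2 * p + 1)) :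
    min p q + 3 ≤ (GP n 2).dist (inl a) (inl b) := by
  obtain ⟨w, hw⟩ := (connected (m := 2)).exists_walk_length_eq_dist (inl a) (inl b)
  obtain ⟨A, B, s, hidx, hlen, -, hB⟩ := exists_of_walk w
  simp only [index_inl, isLeft_inl, Bool.toNat_true, Nat.cast_ofNat] at hidx hB
  have hdvd : (n : ℤ) ∣ A + 2 * B - (2 * p + 1) := by
    rw [← ZMod.intCast_zmod_eq_zero_iff_dvd]
    push_cast
    linear_combination hab - hidx
  obtain ⟨t, ht⟩ := hdvd
  subst hn
  push_cast at ht
  have hwind : 2 * (p : ℤ) + 1 ≤ A + 2 * B ∨ A + 2 * B ≤ -(2 * q + 1) := by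
    rcases le_or_gt 0 t with ht0 | ht0
    · left; nlinarith
    · right; nlinarith
  omega

lemma dist_le_of_adj_inl {p q : ℕ} {a b : ZMod n} {w : ZMod n ⊕ ZMod n}
    (hab : b = a + (2 * p + 1)) (hba : a = b + (2 * q + 1)) (hw : (GP n 2).Adj (inl a) w) :
    (GP n 2).dist w (inl b) ≤ min p q + 3 := by
  rcases eq_or_eq_or_eq_of_adj_inl hw with rfl | rfl | rfl
  · have := dist_inl_inl_le (m := 2) (c := a + 1) (c' := b) p
      (by push_cast; linear_combination hab)
    have := dist_inl_inl_le (m := 2) (c := b) (c' := a + 1) (q + 1)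
      (by push_cast; linear_combination hba)
    rw [SimpleGraph.dist_comm] at this
    omega
  · have := dist_inl_inl_le (m := 2) (c := a - 1) (c' := b) (p + 1)
      (by push_cast; linear_combination hab)
    have := dist_inl_inl_le (m := 2) (c := b) (c' := a - 1) q
      (by push_cast; linear_combination hba)
    rw [SimpleGraph.dist_comm] at this
    omega
  · have := dist_inr_inl_le (m := 2) (c := a) (c' := b) p (by push_cast; linear_combination hab)
    have := dist_inl_inr_le (m := 2) (c := b) (c' := a) q (by push_cast; linear_combination hba)
    rw [SimpleGraph.dist_comm] at this
    omega

theorem mutuallyMaximallyDistant_inl {p q : ℕ} {a b : ZMod n} (hn : n = 2 * (p + q + 1))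
    (hp : 2 ≤ p) (hq : 2 ≤ q) (hab : b = a + (2 * p + 1)) :
    MutuallyMaximallyDistant (GP n 2) (inl a) (inl b) := by
  have hba : a = b + (2 * q + 1) := by
    have hn0 : ((2 * (p + q + 1) : ℕ) : ZMod n) = 0 := hn ▸ ZMod.natCast_self n
    push_cast at hn0
    linear_combination -hn0 - hab
  have hfar := min_add_three_le_dist hn hp hq hab
  refine ⟨fun h => ?_, fun w hw => (dist_le_of_adj_inl hab hba hw).trans hfar, fun w hw => ?_⟩
  · rw [h, SimpleGraph.dist_self] at hfar
    omega
  · rw [SimpleGraph.dist_comm]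
    exact (dist_le_of_adj_inl hba hab hw).trans (by rwa [min_comm])

end GP

theorem stmt_10_general (k : ℕ) :
    ∀ i l : ℕ, i ≤ 4*k - 1 → 3 ≤ l → l ≤ 2*k - 2 →
      MutuallyMaximallyDistant (GP (4*k) 2) (Sum.inl ((i : ℕ) : ZMod (4*k)))
        (Sum.inl ((i + 2*l - 1 : ℕ) : ZMod (4*k))) := by
  intro i l _ hl3 hl2
  refine GP.mutuallyMaximallyDistant_inl (p := l - 1) (q := 2 * k - l) (by omega) (by omega)
    (by omega) ?_
  rw [show i + 2 * l - 1 = i + (2 * (l - 1) + 1) by omega]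
  push_cast
  ring

/-- In `GP (4k) 2` with `k ≥ 3`, for `0 ≤ i ≤ 4k−1` and `3 ≤ l ≤ 2k−2`, the vertices
`uᵢ` and `u_{i+2l−1}` are mutually maximally distant. -/
theorem stmt_10 (k : ℕ) (hk : 3 ≤ k) :
    ∀ i l : ℕ, i ≤ 4*k - 1 → 3 ≤ l → l ≤ 2*k - 2 →
      MutuallyMaximallyDistant (GP (4*k) 2) (Sum.inl ((i : ℕ) : ZMod (4*k)))
        (Sum.inl ((i + 2*l - 1 : ℕ) : ZMod (4*k))) :=
  stmt_10_general k
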